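/- For r ≥ 1, the identity 2(r+2) ∫_{−1}^{1} t√(1−t²) P_{2r+1}(t) dt = (2r+1) ∫_{−1}^{1} √(1−t²) P_{2r}(t) dt holds. -/

import Mathlib

/-!
The function `(1 - t²)^{3/2}` vanishes at `±1` and has derivative `-3t√(1 - t²)`, so integrating by
parts gives `∫ (1 - t²)^{3/2} p' = 3 ∫ t√(1 - t²) p` for every polynomial `p`. For `p = P_{n+1}`, the
identity `(t² - 1) P'_{n+1} = (n + 1)(t P_{n+1} - P_n)`, read off from Rodrigues' formula, turns the
left side into `(n + 1)(∫ √(1 - t²) P_n - ∫ t√(1 - t²) P_{n+1})`. Hence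
`(n + 4) ∫ t√(1 - t²) P_{n+1} = (n + 1) ∫ √(1 - t²) P_n`, and the theorem is the case `n = 2r`.
-/

open Polynomial

/-- The `n`-th Legendre polynomial (Rodrigues' formula), normalized so that `P n 1 = 1`. -/
noncomputable def legendre (n : ℕ) : Polynomial ℝ :=
  (((2 : ℝ) ^ n * n.factorial)⁻¹) • (derivative^[n] ((X ^ 2 - 1) ^ n))

section Rodrigues

variable {R : Type*} [CommRing R]

theorem derivative_X_sq_sub_one_pow_succ (n : ℕ) :
    derivative ((X ^ 2 - 1 : R[X]) ^ (n + 1)) = 2 * ((n : R[X]) + 1) * X * (X ^ 2 - 1) ^ n := by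
  rw [derivative_pow]
  simp only [derivative_sub, derivative_X_pow, derivative_one, C_eq_natCast]
  push_cast
  ring

theorem iterate_derivative_X_sq_sub_one_mul_derivative (k : ℕ) (p : R[X]) :
    derivative^[k + 1] ((X ^ 2 - 1) * derivative p) =
      (X ^ 2 - 1) * derivative^[k + 2] p + 2 * ((k : R[X]) + 1) * X * derivative^[k + 1] p
        + ((k : R[X]) + 1) * (k : R[X]) * derivative^[k] p := by
  have hsplit : (X ^ 2 - 1) * derivative p = derivative p * X * X - derivative p := by ring
  rw [hsplit, iterate_derivative_sub, iterate_derivative_mul_X, Nat.add_sub_cancel,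
    iterate_derivative_derivative_mul_X, iterate_derivative_derivative_mul_X,
    ← Function.iterate_succ_apply]
  simp only [nsmul_eq_mul, Nat.succ_eq_add_one]
  push_cast
  ring

theorem X_sq_sub_one_mul_iterate_derivative_X_sq_sub_one_pow (n : ℕ) :
    (X ^ 2 - 1) * derivative^[n + 2] ((X ^ 2 - 1 : R[X]) ^ (n + 1)) =
      ((n : R[X]) + 1) * ((n : R[X]) + 2) * derivative^[n] ((X ^ 2 - 1) ^ (n + 1)) := by
  set u : R[X] := (X ^ 2 - 1) ^ (n + 1)
  have hode : (X ^ 2 - 1) * derivative u = ((2 * (n + 1) : ℕ) : R[X]) * (u * X) := by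
    rw [derivative_X_sq_sub_one_pow_succ]; push_cast; ring
  have h := congrArg (derivative^[n + 1]) hode
  rw [iterate_derivative_X_sq_sub_one_mul_derivative, iterate_derivative_natCast_mul,
    iterate_derivative_mul_X, Nat.add_sub_cancel, nsmul_eq_mul] at h
  push_cast at h
  linear_combination h

theorem X_mul_iterate_derivative_X_sq_sub_one_pow (n : ℕ) :
    X * derivative^[n + 1] ((X ^ 2 - 1 : R[X]) ^ (n + 1)) =
      ((n : R[X]) + 2) * derivative^[n] ((X ^ 2 - 1) ^ (n + 1))
        + 2 * ((n : R[X]) + 1) * derivative^[n] ((X ^ 2 - 1) ^ n) := by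
  have hX : derivative ((X ^ 2 - 1 : R[X]) ^ (n + 1)) * X =
      ((2 * (n + 1) : ℕ) : R[X]) * ((X ^ 2 - 1) ^ (n + 1) + (X ^ 2 - 1) ^ n) := by
    rw [derivative_X_sq_sub_one_pow_succ]; push_cast; ring
  have h := congrArg (derivative^[n]) hX
  rw [iterate_derivative_derivative_mul_X, iterate_derivative_natCast_mul, iterate_map_add,
    nsmul_eq_mul] at h
  push_cast at h
  linear_combination h

theorem X_sq_sub_one_mul_derivative_iterate_derivative_X_sq_sub_one_pow (n : ℕ) :
    (X ^ 2 - 1) * derivative (derivative^[n + 1] ((X ^ 2 - 1 : R[X]) ^ (n + 1))) =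
      ((n : R[X]) + 1) * (X * derivative^[n + 1] ((X ^ 2 - 1) ^ (n + 1))
        - 2 * ((n : R[X]) + 1) * derivative^[n] ((X ^ 2 - 1) ^ n)) := by
  rw [← Function.iterate_succ_apply' derivative,
    X_sq_sub_one_mul_iterate_derivative_X_sq_sub_one_pow, X_mul_iterate_derivative_X_sq_sub_one_pow]
  ring

end Rodrigues

theorem X_sq_sub_one_mul_derivative_legendre_succ (n : ℕ) :
    (X ^ 2 - 1) * derivative (legendre (n + 1)) =
      ((n : ℝ[X]) + 1) * (X * legendre (n + 1) - legendre n) := by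
  have hscale : ((2 : ℝ) ^ n * n.factorial)⁻¹ =
      2 * (n + 1) * ((2 : ℝ) ^ (n + 1) * (n + 1).factorial)⁻¹ := by
    rw [Nat.factorial_succ]
    push_cast
    field_simp
    ring
  simp only [legendre, hscale, smul_eq_C_mul, derivative_C_mul, map_mul, map_add, map_natCast,
    map_one, map_ofNat]
  linear_combination C ((2 : ℝ) ^ (n + 1) * (n + 1).factorial)⁻¹ *
    X_sq_sub_one_mul_derivative_iterate_derivative_X_sq_sub_one_pow (R := ℝ) n

theorem one_sub_sq_mul_eval_derivative_legendre_succ (n : ℕ) (t : ℝ) :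
    (1 - t ^ 2) * (derivative (legendre (n + 1))).eval t =
      ((n : ℝ) + 1) * ((legendre n).eval t - t * (legendre (n + 1)).eval t) := by
  have h := congrArg (eval t) (X_sq_sub_one_mul_derivative_legendre_succ n)
  simp only [eval_mul, eval_sub, eval_add, eval_pow, eval_X, eval_one, eval_natCast] at h
  linear_combination -h

theorem hasDerivAt_one_sub_sq_mul_sqrt_one_sub_sq {x : ℝ} (hx : x ∈ Set.Ioo (-1) 1) :
    HasDerivAt (fun t => (1 - t ^ 2) * √(1 - t ^ 2)) (-(3 * (x * √(1 - x ^ 2)))) x := by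
  have hpos : 0 < 1 - x ^ 2 := by nlinarith [hx.1, hx.2]
  have hsq : HasDerivAt (fun t : ℝ => 1 - t ^ 2) (-(2 * x)) x := by
    simpa using (hasDerivAt_pow 2 x).const_sub 1
  refine (hsq.fun_mul (hsq.sqrt hpos.ne')).congr_deriv ?_
  have hs : √(1 - x ^ 2) ≠ 0 := (Real.sqrt_pos.2 hpos).ne'
  field_simp
  linear_combination x * Real.sq_sqrt hpos.le

theorem integral_one_sub_sq_mul_sqrt_mul_eval_derivative (p : ℝ[X]) :
    ∫ t in (-1 : ℝ)..1, (1 - t ^ 2) * √(1 - t ^ 2) * (derivative p).eval t =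
      3 * ∫ t in (-1 : ℝ)..1, t * √(1 - t ^ 2) * p.eval t := by
  rw [intervalIntegral.integral_mul_deriv_eq_deriv_mul_of_hasDerivAt
    (u' := fun t => -(3 * (t * √(1 - t ^ 2)))) (by fun_prop) p.continuous.continuousOn
    (fun x hx => hasDerivAt_one_sub_sq_mul_sqrt_one_sub_sq (by simpa using hx))
    (fun x _ => p.hasDerivAt x)
    (Continuous.intervalIntegrable (by fun_prop) _ _)
    (Continuous.intervalIntegrable (by fun_prop) _ _)]
  simp only [neg_mul, intervalIntegral.integral_neg, mul_assoc, intervalIntegral.integral_const_mul]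
  norm_num

theorem add_four_mul_integral_mul_sqrt_mul_legendre_succ (n : ℕ) :
    ((n : ℝ) + 4) * ∫ t in (-1 : ℝ)..1, t * √(1 - t ^ 2) * (legendre (n + 1)).eval t =
      ((n : ℝ) + 1) * ∫ t in (-1 : ℝ)..1, √(1 - t ^ 2) * (legendre n).eval t := by
  have hparts := integral_one_sub_sq_mul_sqrt_mul_eval_derivative (legendre (n + 1))
  have hrec : ∫ t in (-1 : ℝ)..1, (1 - t ^ 2) * √(1 - t ^ 2) * (derivative (legendre (n + 1))).eval t
      = ((n : ℝ) + 1) * (∫ t in (-1 : ℝ)..1, √(1 - t ^ 2) * (legendre n).eval t)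
        - ((n : ℝ) + 1) * ∫ t in (-1 : ℝ)..1, t * √(1 - t ^ 2) * (legendre (n + 1)).eval t := by
    rw [← intervalIntegral.integral_const_mul, ← intervalIntegral.integral_const_mul,
      ← intervalIntegral.integral_sub (Continuous.intervalIntegrable (by fun_prop) _ _)
        (Continuous.intervalIntegrable (by fun_prop) _ _)]
    refine intervalIntegral.integral_congr fun t _ => ?_
    linear_combination √(1 - t ^ 2) * one_sub_sq_mul_eval_derivative_legendre_succ n t
  linarith

theorem odd_legendre_integral_identity_general (r : ℕ) :
    2 * ((r : ℝ) + 2) * ∫ t in (-1 : ℝ)..1, t * Real.sqrt (1 - t ^ 2) * (legendre (2 * r + 1)).eval t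
      = (2 * (r : ℝ) + 1) * ∫ t in (-1 : ℝ)..1, Real.sqrt (1 - t ^ 2) * (legendre (2 * r)).eval t := by
  have h := add_four_mul_integral_mul_sqrt_mul_legendre_succ (2 * r)
  push_cast at h
  linear_combination h

theorem odd_legendre_integral_identity (r : ℕ) (hr : 1 ≤ r) :
    2 * ((r : ℝ) + 2) * ∫ t in (-1 : ℝ)..1, t * Real.sqrt (1 - t ^ 2) * (legendre (2 * r + 1)).eval t
      = (2 * (r : ℝ) + 1) * ∫ t in (-1 : ℝ)..1, Real.sqrt (1 - t ^ 2) * (legendre (2 * r)).eval t :=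
  odd_legendre_integral_identity_general r
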